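/- Funk parabola of type 1: let y₀ ∈ (−1,1) and F = (f₀,g₀) ∈ B² with g₀ ≠ y₀. Put σ₁ = 1 + sgn(y₀−g₀)·y₀, B = −2f₀/σ₁, C = (f₀² + (y₀−g₀)² + 2|y₀−g₀|)/σ₁², E = −2|y₀−g₀|/σ₁, and for a point (x,y) set ȳ = 1 + sgn(y₀−g₀)·y. Let 𝓔 = {(x,y) ∈ ℝ² : x² + B·x·ȳ + C·ȳ² + E·ȳ = 0}. Then the set of points P = (x,y) ∈ B² with P ≠ F satisfying d_F(F,P) = ln ρ(y₀,y) equals 𝓔 \ {(0, −sgn(y₀−g₀))}. -/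

import Mathlib

/-!
Write `a = ⟪F, P - F⟫`, `b = ⟪P, P - F⟫` and `r = √k`, so that `d_F(F,P) = ln ((r - a)/(r - b))`,
where `a < b`, and `b < r` exactly when `P` lies in the disk. For `y ≠ y₀`, with
`σ = sgn(y₀ - y)`, `ȳ = 1 + σ y` and `ȳ₀ = 1 + σ y₀`, the defining equation becomes
`(r - a) ȳ = (r - b) ȳ₀`. The polynomial identity `k (y₀ - y)² - (b ȳ₀ - a ȳ)² = -‖P - F‖² Q`,
where `Q = (ȳ₀ x - f₀ ȳ)² - δ ȳ (2 ȳ₀ - (δ + 2) ȳ)` with `δ = σ (y₀ - g₀)` is the ellipse cleared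
of denominators, turns this into `Q = 0` as long as `0 < ȳ < ȳ₀`, the sign of the square root
being forced by `a < b`. The shape of `Q` then shows `δ > 0`, i.e. `σ = sgn(y₀ - g₀)`; conversely
it gives `0 < ȳ < ȳ₀` on the ellipse away from `(0, -σ)`, and `r > b` puts the point in the disk.
-/


/-- The Funk distance on the open unit ball of Euclidean n-space:
`d_F(P,Q) = ln((√k − ⟨P, Q−P⟩)/(√k − ⟨Q, Q−P⟩))` with
`k = ⟨P, Q−P⟩² + (1 − ‖P‖²)‖Q−P‖²`. -/
noncomputable def funkDist {n : ℕ} (P Q : EuclideanSpace ℝ (Fin n)) : ℝ :=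
  Real.log
    ((Real.sqrt ((inner ℝ P (Q - P) : ℝ) ^ 2 + (1 - ‖P‖ ^ 2) * ‖Q - P‖ ^ 2) - (inner ℝ P (Q - P) : ℝ)) /
     (Real.sqrt ((inner ℝ P (Q - P) : ℝ) ^ 2 + (1 - ‖P‖ ^ 2) * ‖Q - P‖ ^ 2) - (inner ℝ Q (Q - P) : ℝ)))

/-- `ρ(ε,η) = (1 + sgn(ε−η)·ε)/(1 + sgn(ε−η)·η)`. -/
noncomputable def rho (ε η : ℝ) : ℝ :=
  (1 + Real.sign (ε - η) * ε) / (1 + Real.sign (ε - η) * η)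

/-- The point `(a,b)` of the Euclidean plane. -/
def pt (a b : ℝ) : EuclideanSpace ℝ (Fin 2) := WithLp.toLp 2 ![a, b]

open Real RealInnerProductSpace

lemma inner_pt (a b c d : ℝ) : ⟪pt a b, pt c d⟫ = a * c + b * d := by
  simp [pt, PiLp.inner_apply, Fin.sum_univ_two, mul_comm]

lemma pt_sub (a b c d : ℝ) : pt a b - pt c d = pt (a - c) (b - d) := by
  ext i; fin_cases i <;> simp [pt]

lemma norm_pt_sq (a b : ℝ) : ‖pt a b‖ ^ 2 = a ^ 2 + b ^ 2 := by
  rw [← real_inner_self_eq_norm_sq, inner_pt]; ring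

lemma pt_inj {a b c d : ℝ} : pt a b = pt c d ↔ a = c ∧ b = d := by
  refine ⟨fun h => ?_, fun ⟨ha, hb⟩ => ha ▸ hb ▸ rfl⟩
  have h' := congrArg WithLp.ofLp h
  exact ⟨by simpa [pt] using congrFun h' 0, by simpa [pt] using congrFun h' 1⟩

lemma abs_lt_one_of_norm_pt_lt_one {a b : ℝ} (h : ‖pt a b‖ < 1) : |b| < 1 := by
  have := norm_pt_sq a b
  rw [← sq_lt_one_iff_abs_lt_one]
  nlinarith [norm_nonneg (pt a b), sq_nonneg a]

lemma sign_eq_of_mul_pos {σ t : ℝ} (hσ : σ = -1 ∨ σ = 1) (h : 0 < σ * t) : Real.sign t = σ := by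
  rcases hσ with rfl | rfl
  · exact Real.sign_of_neg (by linarith)
  · exact Real.sign_of_pos (by linarith)

lemma one_add_mul_pos {σ y : ℝ} (hσ : σ = -1 ∨ σ = 1) (hy : |y| < 1) : 0 < 1 + σ * y := by
  rcases hσ with rfl | rfl <;> linarith [abs_lt.mp hy]

lemma rho_self (ε : ℝ) : rho ε ε = 1 := by
  simp [rho]

section Funk

variable {n : ℕ} (P Q : EuclideanSpace ℝ (Fin n))

noncomputable def funkDisc : ℝ := ⟪P, Q - P⟫ ^ 2 + (1 - ‖P‖ ^ 2) * ‖Q - P‖ ^ 2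

lemma funkDist_eq_log : funkDist P Q =
    log ((√(funkDisc P Q) - ⟪P, Q - P⟫) / (√(funkDisc P Q) - ⟪Q, Q - P⟫)) := rfl

lemma inner_sub_inner_eq_norm_sq : ⟪Q, Q - P⟫ - ⟪P, Q - P⟫ = ‖Q - P‖ ^ 2 := by
  rw [← inner_sub_left, real_inner_self_eq_norm_sq]

lemma funkDisc_sub_sq_inner_right :
    funkDisc P Q - ⟪Q, Q - P⟫ ^ 2 = (1 - ‖Q‖ ^ 2) * ‖Q - P‖ ^ 2 := by
  have hQ : ‖Q‖ ^ 2 = ‖P‖ ^ 2 + 2 * ⟪P, Q - P⟫ + ‖Q - P‖ ^ 2 := by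
    simpa using norm_add_sq_real P (Q - P)
  rw [funkDisc, hQ, ← inner_sub_inner_eq_norm_sq P Q]
  ring

variable {P Q}

lemma funkDisc_nonneg (hP : ‖P‖ ≤ 1) : 0 ≤ funkDisc P Q :=
  add_nonneg (sq_nonneg _) (mul_nonneg (by nlinarith [norm_nonneg P]) (sq_nonneg _))

lemma neg_sqrt_funkDisc_le (hP : ‖P‖ ≤ 1) : -√(funkDisc P Q) ≤ ⟪P, Q - P⟫ := by
  refine neg_sqrt_le_of_sq_le (le_add_of_nonneg_right (mul_nonneg ?_ (sq_nonneg _)))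
  nlinarith [norm_nonneg P]

lemma inner_lt_sqrt_funkDisc (hP : ‖P‖ < 1) (hPQ : P ≠ Q) : ⟪P, Q - P⟫ < √(funkDisc P Q) := by
  refine lt_sqrt_of_sq_lt (lt_add_of_pos_right _ (mul_pos ?_ ?_))
  · nlinarith [norm_nonneg P]
  · exact pow_pos (norm_pos_iff.mpr (sub_ne_zero.mpr hPQ.symm)) 2

lemma inner_lt_sqrt_funkDisc_iff (hP : ‖P‖ < 1) (hPQ : P ≠ Q) :
    ⟪Q, Q - P⟫ < √(funkDisc P Q) ↔ ‖Q‖ < 1 := by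
  have hd := funkDisc_sub_sq_inner_right P Q
  have hn : 0 < ‖Q - P‖ ^ 2 := pow_pos (norm_pos_iff.mpr (sub_ne_zero.mpr hPQ.symm)) 2
  constructor
  · intro h
    have hab := inner_sub_inner_eq_norm_sq P Q
    have hlow : -√(funkDisc P Q) < ⟪Q, Q - P⟫ := by
      linarith [neg_sqrt_funkDisc_le (Q := Q) hP.le]
    have hsq := sq_lt_sq' hlow h
    rw [sq_sqrt (funkDisc_nonneg hP.le)] at hsq
    have : 0 < 1 - ‖Q‖ ^ 2 := pos_of_mul_pos_left (by linarith) hn.le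
    nlinarith [norm_nonneg Q]
  · intro hQ
    have : 0 < (1 - ‖Q‖ ^ 2) * ‖Q - P‖ ^ 2 := mul_pos (by nlinarith [norm_nonneg Q]) hn
    exact lt_sqrt_of_sq_lt (by linarith)

lemma funkDist_pos (hP : ‖P‖ < 1) (hQ : ‖Q‖ < 1) (hPQ : P ≠ Q) : 0 < funkDist P Q := by
  have hb := (inner_lt_sqrt_funkDisc_iff hP hPQ).mpr hQ
  have hab : ⟪P, Q - P⟫ < ⟪Q, Q - P⟫ := by
    have := inner_sub_inner_eq_norm_sq P Q
    linarith [pow_pos (norm_pos_iff.mpr (sub_ne_zero.mpr hPQ.symm)) 2]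
  exact (funkDist_eq_log P Q).symm ▸ log_pos ((one_lt_div (by linarith)).mpr (by linarith))

lemma funkDist_eq_log_div_iff {u v : ℝ} (hP : ‖P‖ < 1) (hQ : ‖Q‖ < 1) (hPQ : P ≠ Q)
    (hu : 0 < u) (hv : 0 < v) :
    funkDist P Q = log (v / u) ↔
      (√(funkDisc P Q) - ⟪P, Q - P⟫) * u = (√(funkDisc P Q) - ⟪Q, Q - P⟫) * v := by
  have ha := sub_pos.mpr (inner_lt_sqrt_funkDisc hP hPQ)
  have hb := sub_pos.mpr ((inner_lt_sqrt_funkDisc_iff hP hPQ).mpr hQ)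
  rw [funkDist_eq_log, (log_injOn_pos).eq_iff (div_pos ha hb) (div_pos hv hu),
    div_eq_div_iff hb.ne' hu.ne', mul_comm v]

end Funk

-- The other square root would give `(r + b) v = (r + a) u`, impossible as `0 ≤ r + a < r + b`.
lemma sub_mul_eq_sub_mul_of_sq_eq {a b r u v : ℝ} (hra : -r ≤ a) (hab : a < b) (hu : 0 < u)
    (huv : u < v) (h : (r * (v - u)) ^ 2 = (b * v - a * u) ^ 2) : (r - a) * u = (r - b) * v := by
  rcases sq_eq_sq_iff_eq_or_eq_neg.mp h with h | h
  · linarith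
  · nlinarith

section Conic

variable {v δ f x u : ℝ}

-- With `v = σ₁`, `u = ȳ` and `δ = |y₀ - g₀|`, this is `σ₁²` times the ellipse equation
-- of the theorem.
def conicForm (v δ f x u : ℝ) : ℝ := (v * x - f * u) ^ 2 - δ * u * (2 * v - (δ + 2) * u)

lemma conicForm_pos_of_neg (hu : 0 < u) (huv : u < v) (hδ : δ < 0) : 0 < conicForm v δ f x u := by
  have hw : 0 < 2 * v - (δ + 2) * u := by nlinarith
  have : δ * u * (2 * v - (δ + 2) * u) < 0 :=
    mul_neg_of_neg_of_pos (mul_neg_of_neg_of_pos hδ hu) hw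
  unfold conicForm
  nlinarith [sq_nonneg (v * x - f * u)]

lemma pos_and_lt_of_conicForm_eq_zero (hv : 0 < v) (hδ : 0 < δ) (h : conicForm v δ f x u = 0)
    (hxu : ¬(x = 0 ∧ u = 0)) : 0 < u ∧ u < v := by
  have hw : (v * x - f * u) ^ 2 = δ * u * (2 * v - (δ + 2) * u) := sub_eq_zero.mp h
  have hu : 0 < u := by
    rcases lt_trichotomy u 0 with hu | hu | hu
    · nlinarith [sq_nonneg (v * x - f * u), mul_neg_of_pos_of_neg hδ hu]
    · have : v * x = 0 := by simpa [hu] using hw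
      exact absurd ⟨(mul_eq_zero.mp this).resolve_left hv.ne', hu⟩ hxu
    · exact hu
  refine ⟨hu, ?_⟩
  nlinarith [sq_nonneg (v * x - f * u), mul_pos hδ hu]

lemma ellipse_eq_conicForm_div (hv : v ≠ 0) (δ f x u : ℝ) :
    x ^ 2 + -2 * f / v * x * u + (f ^ 2 + δ ^ 2 + 2 * δ) / v ^ 2 * u ^ 2 + -2 * δ / v * u =
      conicForm v δ f x u / v ^ 2 := by
  unfold conicForm
  field_simp
  ring

end Conic

lemma conicForm_focus {σ : ℝ} (hσ : σ = -1 ∨ σ = 1) (y₀ f g : ℝ) :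
    conicForm (1 + σ * y₀) (σ * (y₀ - g)) f f (1 + σ * g) = (y₀ - g) ^ 2 * (f ^ 2 + g ^ 2 - 1) := by
  unfold conicForm
  rcases hσ with rfl | rfl <;> ring

lemma funkDisc_pt_mul_sub_sq {σ : ℝ} (hσ : σ = -1 ∨ σ = 1) (y₀ f g x y : ℝ) :
    funkDisc (pt f g) (pt x y) * (y₀ - y) ^ 2 -
        (⟪pt x y, pt x y - pt f g⟫ * (1 + σ * y₀) - ⟪pt f g, pt x y - pt f g⟫ * (1 + σ * y)) ^ 2 =
      -‖pt x y - pt f g‖ ^ 2 * conicForm (1 + σ * y₀) (σ * (y₀ - g)) f x (1 + σ * y) := by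
  simp only [funkDisc, pt_sub, inner_pt, norm_pt_sq, conicForm]
  rcases hσ with rfl | rfl <;> ring

lemma sub_mul_eq_sub_mul_iff_conicForm_eq_zero {σ y₀ f g x y : ℝ} (hσ : σ = -1 ∨ σ = 1)
    (hF : ‖pt f g‖ < 1) (hFP : pt f g ≠ pt x y) (hu : 0 < 1 + σ * y)
    (huv : 1 + σ * y < 1 + σ * y₀) :
    (√(funkDisc (pt f g) (pt x y)) - ⟪pt f g, pt x y - pt f g⟫) * (1 + σ * y) =
        (√(funkDisc (pt f g) (pt x y)) - ⟪pt x y, pt x y - pt f g⟫) * (1 + σ * y₀) ↔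
      conicForm (1 + σ * y₀) (σ * (y₀ - g)) f x (1 + σ * y) = 0 := by
  have key := funkDisc_pt_mul_sub_sq hσ y₀ f g x y
  set F := pt f g
  set P := pt x y
  have hn : 0 < ‖P - F‖ ^ 2 := pow_pos (norm_pos_iff.mpr (sub_ne_zero.mpr hFP.symm)) 2
  have hab := inner_sub_inner_eq_norm_sq F P
  have hr : funkDisc F P * (y₀ - y) ^ 2 = (√(funkDisc F P) * ((1 + σ * y₀) - (1 + σ * y))) ^ 2 := by
    rw [mul_pow, sq_sqrt (funkDisc_nonneg hF.le)]
    rcases hσ with rfl | rfl <;> ring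
  rw [hr] at key
  constructor
  · intro h
    have h0 : -‖P - F‖ ^ 2 * conicForm (1 + σ * y₀) (σ * (y₀ - g)) f x (1 + σ * y) = 0 := by
      rw [← key]; linear_combination -(√(funkDisc F P) * ((1 + σ * y₀) - (1 + σ * y)) +
        (⟪P, P - F⟫ * (1 + σ * y₀) - ⟪F, P - F⟫ * (1 + σ * y))) * h
    exact (mul_eq_zero.mp h0).resolve_left (neg_ne_zero.mpr hn.ne')
  · intro h
    rw [h, mul_zero, sub_eq_zero] at key
    exact sub_mul_eq_sub_mul_of_sq_eq (neg_sqrt_funkDisc_le hF.le) (by linarith) hu huv key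

lemma conicForm_eq_zero_of_funkDist_eq_log_rho {s y₀ f g x y : ℝ} (hs : Real.sign (y₀ - g) = s)
    (hgy : g ≠ y₀) (hF : ‖pt f g‖ < 1) (hP : ‖pt x y‖ < 1) (hFP : pt f g ≠ pt x y)
    (h : funkDist (pt f g) (pt x y) = log (rho y₀ y)) :
    conicForm (1 + s * y₀) (s * (y₀ - g)) f x (1 + s * y) = 0 := by
  have hyy : y₀ - y ≠ 0 := by
    intro hyy
    rw [sub_eq_zero.mp hyy, rho_self, log_one] at h
    exact (funkDist_pos hF hP hFP).ne' h
  obtain ⟨σ, hσ_def⟩ : ∃ σ, Real.sign (y₀ - y) = σ := ⟨_, rfl⟩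
  have hσ := hσ_def ▸ Real.sign_apply_eq_of_ne_zero _ hyy
  have hu := one_add_mul_pos hσ (abs_lt_one_of_norm_pt_lt_one hP)
  have huv : 1 + σ * y < 1 + σ * y₀ := by linarith [hσ_def ▸ Real.sign_mul_pos_of_ne_zero _ hyy]
  rw [rho, hσ_def] at h
  have hQ := (sub_mul_eq_sub_mul_iff_conicForm_eq_zero hσ hF hFP hu huv).mp
    ((funkDist_eq_log_div_iff hF hP hFP hu (hu.trans huv)).mp h)
  have hδ : 0 < σ * (y₀ - g) := by
    have hσ0 : σ ≠ 0 := by rcases hσ with rfl | rfl <;> norm_num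
    rcases (mul_ne_zero hσ0 (sub_ne_zero.mpr hgy.symm)).lt_or_gt with hδ | hδ
    · exact absurd hQ (conicForm_pos_of_neg hu huv hδ).ne'
    · exact hδ
  rwa [← hs, sign_eq_of_mul_pos hσ hδ]

lemma funkDist_eq_log_rho_of_conicForm_eq_zero {s y₀ f g x y : ℝ} (hs : Real.sign (y₀ - g) = s)
    (hy₀ : |y₀| < 1) (hgy : g ≠ y₀) (hF : ‖pt f g‖ < 1)
    (h : conicForm (1 + s * y₀) (s * (y₀ - g)) f x (1 + s * y) = 0) (hxy : ¬(x = 0 ∧ y = -s)) :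
    ‖pt x y‖ < 1 ∧ pt f g ≠ pt x y ∧ funkDist (pt f g) (pt x y) = log (rho y₀ y) := by
  have hgy' := sub_ne_zero.mpr hgy.symm
  have hs1 : s = -1 ∨ s = 1 := hs ▸ Real.sign_apply_eq_of_ne_zero _ hgy'
  have hv := one_add_mul_pos hs1 hy₀
  have hδ : 0 < s * (y₀ - g) := hs ▸ Real.sign_mul_pos_of_ne_zero _ hgy'
  obtain ⟨hu, huv⟩ := pos_and_lt_of_conicForm_eq_zero hv hδ h fun ⟨hx, hu⟩ =>
    hxy ⟨hx, by rcases hs1 with rfl | rfl <;> linarith⟩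
  have hFP : pt f g ≠ pt x y := by
    intro hFP
    obtain ⟨hx, hy⟩ := pt_inj.mp hFP
    subst hx hy
    rw [conicForm_focus hs1] at h
    have hfg : f ^ 2 + g ^ 2 - 1 < 0 := by nlinarith [norm_pt_sq f g, norm_nonneg (pt f g)]
    exact (mul_neg_of_pos_of_neg (pow_pos (abs_pos.mpr hgy') 2 |>.trans_eq (sq_abs _)) hfg).ne h
  have hrel := (sub_mul_eq_sub_mul_iff_conicForm_eq_zero hs1 hF hFP hu huv).mpr h
  have hP : ‖pt x y‖ < 1 := by
    refine (inner_lt_sqrt_funkDisc_iff hF hFP).mp (sub_pos.mp (pos_of_mul_pos_left ?_ hv.le))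
    rw [← hrel]
    exact mul_pos (sub_pos.mpr (inner_lt_sqrt_funkDisc hF hFP)) hu
  have hrho : rho y₀ y = (1 + s * y₀) / (1 + s * y) := by
    rw [rho, sign_eq_of_mul_pos hs1 (by linarith : 0 < s * (y₀ - y))]
  exact ⟨hP, hFP, by rw [hrho]; exact (funkDist_eq_log_div_iff hF hP hFP hu hv).mpr hrel⟩

/-- The (non-degenerate) type-1 Funk parabola with focus `F = (f₀,g₀)` and directrix
`y = y₀` is the Euclidean ellipse `x² + Bxȳ + Cȳ² + Eȳ = 0` (in `x` and
`ȳ = 1 + sgn(y₀−g₀)·y`) minus the point `(0, −sgn(y₀−g₀))`. -/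
theorem funk_parabola_stmt7 (y₀ f₀ g₀ s σ₁ B C E : ℝ)
    (hy₀ : -1 < y₀ ∧ y₀ < 1) (hF : ‖pt f₀ g₀‖ < 1) (hgy : g₀ ≠ y₀)
    (hs : s = Real.sign (y₀ - g₀)) (hσ : σ₁ = 1 + s * y₀)
    (hB : B = -2 * f₀ / σ₁)
    (hC : C = (f₀ ^ 2 + (y₀ - g₀) ^ 2 + 2 * |y₀ - g₀|) / σ₁ ^ 2)
    (hE : E = -2 * |y₀ - g₀| / σ₁) :
    {p : ℝ × ℝ | ‖pt p.1 p.2‖ < 1 ∧ pt p.1 p.2 ≠ pt f₀ g₀ ∧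
        funkDist (pt f₀ g₀) (pt p.1 p.2) = Real.log (rho y₀ p.2)} =
      {p : ℝ × ℝ | p.1 ^ 2 + B * p.1 * (1 + s * p.2) + C * (1 + s * p.2) ^ 2
          + E * (1 + s * p.2) = 0} \ {((0 : ℝ), -s)} := by
  subst hσ hB hC hE
  have hgy' := sub_ne_zero.mpr hgy.symm
  have hs1 : s = -1 ∨ s = 1 := hs.symm ▸ Real.sign_apply_eq_of_ne_zero _ hgy'
  have hv := one_add_mul_pos hs1 (abs_lt.mpr hy₀)
  have hδ : 0 < s * (y₀ - g₀) := hs ▸ Real.sign_mul_pos_of_ne_zero _ hgy'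
  have habs : |y₀ - g₀| = s * (y₀ - g₀) := by
    rw [← abs_of_pos hδ, abs_mul, show |s| = 1 by rcases hs1 with rfl | rfl <;> norm_num, one_mul]
  have hsq : (y₀ - g₀) ^ 2 = (s * (y₀ - g₀)) ^ 2 := by rcases hs1 with rfl | rfl <;> ring
  ext ⟨x, y⟩
  simp only [Set.mem_ofPred_eq, Set.mem_sdiff, Set.mem_singleton_iff, Prod.mk.injEq]
  rw [habs, hsq, ellipse_eq_conicForm_div hv.ne', div_eq_zero_iff,
    or_iff_left (pow_ne_zero 2 hv.ne')]
  constructor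
  · rintro ⟨hP, hPF, h⟩
    refine ⟨conicForm_eq_zero_of_funkDist_eq_log_rho hs.symm hgy hF hP hPF.symm h, ?_⟩
    rintro ⟨rfl, rfl⟩
    have := abs_lt_one_of_norm_pt_lt_one hP
    rcases hs1 with rfl | rfl <;> norm_num at this
  · rintro ⟨h, hxy⟩
    obtain ⟨hP, hFP, hd⟩ :=
      funkDist_eq_log_rho_of_conicForm_eq_zero hs.symm (abs_lt.mpr hy₀) hgy hF h hxy
    exact ⟨hP, hFP.symm, hd⟩
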